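/- arXiv:1105.2415 — 3 statements merged into one kernel-verified Lean document; each statement's English description precedes it below -/
import Mathlib

section
/- Let s ≥ 0. Then: (i) every facet of the adjoint polytope P^(s) is of the form F^(s) := {x ∈ P^(s) : d_F(x) = s} for some facet F of P; (ii) if P^(s) has dimension n and x ∈ P^(s), then d_{P^(s)}(x) = d_P(x) − s; moreover, if x lies in the interior of P^(s) and d_P(x) = d_F(x) for a facet F of P, then F^(s) is a facet of P^(s) and d_{P^(s)}(x) = d_{F^(s)}(x). -/
open scoped BigOperators Pointwise

noncomputable section

/-- Pairing `⟨a, x⟩ = ∑ aⱼ xⱼ` of an integer linear functional with a real point. -/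
def ipair {n : ℕ} (a : Fin n → ℤ) (x : Fin n → ℝ) : ℝ := ∑ j, (a j : ℝ) * x j

/-- An integer vector is primitive if it is nonzero and not a nontrivial integer
multiple of another integer vector. -/
def IsPrimitive {n : ℕ} (a : Fin n → ℤ) : Prop :=
  a ≠ 0 ∧ ∀ (k : ℤ) (b : Fin n → ℤ), a = k • b → IsUnit k

/-- The set of integer (lattice) points of `ℝⁿ`. -/
def IntPts (n : ℕ) : Set (Fin n → ℝ) := Set.range (fun z : Fin n → ℤ => fun j => (z j : ℝ))

/-- The dimension of a subset of `ℝⁿ` (the dimension of its affine hull). -/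
def setDim {n : ℕ} (S : Set (Fin n → ℝ)) : ℕ := Module.finrank ℝ (vectorSpan ℝ S)

/-- An irredundant facet description `P = {x : A x ≥ b}` of an `n`-dimensional
rational polytope: the rows `aᵢ` of `A` are primitive integer vectors, the right hand
sides are rational, `P` is bounded and `n`-dimensional, every inequality defines a facet
(a face of dimension `n-1`), and no inequality is repeated. -/
structure PolyDesc (n m : ℕ) : Type where
  hm : 0 < m
  A : Fin m → Fin n → ℤ
  b : Fin m → ℚ
  prim : ∀ i, IsPrimitive (A i)
  bounded : Bornology.IsBounded {x : Fin n → ℝ | ∀ i, (b i : ℝ) ≤ ipair (A i) x}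
  fulldim : setDim {x : Fin n → ℝ | ∀ i, (b i : ℝ) ≤ ipair (A i) x} = n
  facet_dim : ∀ i, setDim {x : Fin n → ℝ |
      (∀ j, (b j : ℝ) ≤ ipair (A j) x) ∧ ipair (A i) x = (b i : ℝ)} + 1 = n
  irredundant : Function.Injective (fun i => (A i, b i))

namespace PolyDesc

variable {n m : ℕ} (D : PolyDesc n m)

/-- The polytope `P` itself. -/
def pts : Set (Fin n → ℝ) := {x | ∀ i, (D.b i : ℝ) ≤ ipair (D.A i) x}

/-- Lattice distance `d_{Fᵢ}(x) = ⟨aᵢ, x⟩ - bᵢ` from (the hyperplane spanned by)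
the `i`-th facet. -/
def dF (i : Fin m) (x : Fin n → ℝ) : ℝ := ipair (D.A i) x - (D.b i : ℝ)

/-- Lattice distance `d_P(x) = minᵢ d_{Fᵢ}(x)` from the boundary of `P`. -/
def dist (x : Fin n → ℝ) : ℝ :=
  Finset.univ.inf'
    (Finset.univ_nonempty_iff.mpr (Fin.pos_iff_nonempty.mp D.hm))
    (fun i => D.dF i x)

/-- The adjoint polytope `P⁽ˢ⁾ = {x : d_P(x) ≥ s}`. -/
def adj (s : ℝ) : Set (Fin n → ℝ) := {x | s ≤ D.dist x}

/-- The `i`-th facet `Fᵢ` of `P`. -/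
def facet (i : Fin m) : Set (Fin n → ℝ) := {x ∈ D.pts | ipair (D.A i) x = (D.b i : ℝ)}

/-- The set `{s > 0 : P⁽ˢ⁾ ≠ ∅}`, whose supremum is `μ(P)⁻¹`. -/
def qcdInvSet : Set ℝ := {s : ℝ | 0 < s ∧ (D.adj s).Nonempty}

/-- `μ(P)⁻¹ = sup {s > 0 : P⁽ˢ⁾ ≠ ∅}`. -/
def qcdInv : ℝ := sSup D.qcdInvSet

/-- The ℚ-codegree `μ(P) = (sup {s > 0 : P⁽ˢ⁾ ≠ ∅})⁻¹`. -/
def qcd : ℝ := D.qcdInv⁻¹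

/-- The core `core(P) = P^{(1/μ(P))}`. -/
def core : Set (Fin n → ℝ) := D.adj D.qcdInv

/-- The codegree `cd(P) = min {k ∈ ℕ, k ≥ 1 : int(kP) ∩ ℤⁿ ≠ ∅}`. -/
def codeg : ℕ := sInf {k : ℕ | 0 < k ∧
  ∃ z : Fin n → ℤ, (fun j => (z j : ℝ)) ∈ interior ((k : ℝ) • D.pts)}

end PolyDesc

/-- The face of `S` on which the linear functional `u` is maximized. -/
def argFace {n : ℕ} (S : Set (Fin n → ℝ)) (u : Fin n → ℝ) : Set (Fin n → ℝ) :=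
  {x ∈ S | ∀ y ∈ S, ∑ j, u j * y j ≤ ∑ j, u j * x j}

/-- `S` and `T` have the same normal fan: two linear functionals lie in the same
(relatively open) cone of the normal fan of `S`, i.e. are maximized on the same face
of `S`, iff the same holds for `T`. -/
def SameNormalFan {n : ℕ} (S T : Set (Fin n → ℝ)) : Prop :=
  ∀ u v : Fin n → ℝ, (argFace S u = argFace S v ↔ argFace T u = argFace T v)

/-- The normal fan of `S` refines the normal fan of `T`. -/
def RefinesNormalFan {n : ℕ} (S T : Set (Fin n → ℝ)) : Prop :=
  ∀ u v : Fin n → ℝ, argFace S u = argFace S v → argFace T u = argFace T v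

namespace PolyDesc
variable {n m : ℕ} (D : PolyDesc n m)

/-- `{s > 0 : N(P⁽ˢ⁾) = N(P)}`, whose supremum is `τ(P)⁻¹`. -/
def nefInvSet : Set ℝ := {s : ℝ | 0 < s ∧ SameNormalFan (D.adj s) D.pts}

/-- `τ(P)⁻¹ = sup {s > 0 : N(P⁽ˢ⁾) = N(P)}`. -/
def nefInv : ℝ := sSup D.nefInvSet

/-- The nef value `τ(P)`. -/
def nefVal : ℝ := D.nefInv⁻¹

/-- The set of inequalities active at `x`; the normal cone of the minimal face of `P`
containing `x` is generated by `{aᵢ : i ∈ active x}`, and all cones of the normal fan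
of `P` arise in this way. -/
def active (x : Fin n → ℝ) : Set (Fin m) := {i | ipair (D.A i) x = (D.b i : ℝ)}

/-- The normal cone at the vertex `v` is ℚ-Gorenstein of index `r`, witnessed by the
primitive lattice point `u = u_σ` with `⟨aᵢ, u⟩ = r` for all active `i`. -/
def VertexQG (v : Fin n → ℝ) (u : Fin n → ℤ) (r : ℤ) : Prop :=
  IsPrimitive u ∧ 0 < r ∧ ∀ i ∈ D.active v, (∑ j, D.A i j * u j) = r

/-- The normal fan of `P` is ℚ-Gorenstein: every maximal cone (normal cone of a
vertex, i.e. of an extreme point) is ℚ-Gorenstein. -/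
def QGorenstein : Prop := ∀ v ∈ Set.extremePoints ℝ D.pts, ∃ u r, D.VertexQG v u r

end PolyDesc

/-- The point `v(s) = v + (s/r_σ) • u_σ`. -/
def vmove {n : ℕ} (v : Fin n → ℝ) (s : ℝ) (u : Fin n → ℤ) (r : ℤ) : Fin n → ℝ :=
  v + (s / (r : ℝ)) • (fun j => ((u j : ℝ)))

/-- The height of a point `y` in the cone generated by `{aᵢ : i ∈ I}`:
`ht(y) = max {∑ λᵢ : λᵢ ≥ 0, ∑ λᵢ aᵢ = y}`. -/
def coneHeight {n m : ℕ} (D : PolyDesc n m) (I : Set (Fin m)) (y : Fin n → ℝ) : ℝ :=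
  sSup {t : ℝ | ∃ c : Fin m → ℝ, (∀ i, 0 ≤ c i) ∧ (∀ i ∉ I, c i = 0) ∧
    (y = ∑ i, c i • (fun j => ((D.A i j : ℝ)))) ∧ t = ∑ i, c i}

/-- `P` is α-canonical: for every cone `σ` of the normal fan of `P` (the normal cone
of the minimal face containing a point `x ∈ P`, generated by `{aᵢ : i ∈ active x}`),
every nonzero lattice point of `σ` has height at least `α`. -/
def AlphaCanonical {n m : ℕ} (D : PolyDesc n m) (α : ℝ) : Prop :=
  ∀ x ∈ D.pts, ∀ z : Fin n → ℤ, z ≠ 0 →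
    (∃ c : Fin m → ℝ, (∀ i, 0 ≤ c i) ∧ (∀ i ∉ D.active x, c i = 0) ∧
      ((fun j => ((z j : ℝ))) = ∑ i, c i • (fun j => ((D.A i j : ℝ))))) →
    α ≤ coneHeight D (D.active x) (fun j => ((z j : ℝ)))

/-- `P` is a lattice polytope: the convex hull of finitely many integer points. -/
def IsLatticePoly {n : ℕ} (P : Set (Fin n → ℝ)) : Prop :=
  ∃ V : Finset (Fin n → ℤ),
    P = convexHull ℝ ((fun z : Fin n → ℤ => fun j => ((z j : ℝ))) '' (V : Set (Fin n → ℤ)))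

/-- The `i`-th standard basis vector of `ℝᵗ`. -/
def stdBasisVec (t : ℕ) (i : Fin t) : Fin t → ℝ := fun j => if j = i then 1 else 0

/-- The marking vectors of a Cayley sum: `0, e₁, …, e_t ∈ ℝᵗ`. -/
def cayleyVec (t : ℕ) : Fin (t + 1) → (Fin t → ℝ) :=
  fun j => if h : (j : ℕ) = 0 then 0 else stdBasisVec t ⟨(j : ℕ) - 1, by have := j.isLt; omega⟩

/-- The Cayley sum `Q₀ * ⋯ * Q_t = conv((Q₀ × {0}) ∪ (Q₁ × {e₁}) ∪ ⋯ ∪ (Q_t × {e_t}))`. -/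
def cayleySum {k t : ℕ} (Q : Fin (t + 1) → Set (Fin k → ℝ)) :
    Set ((Fin k → ℝ) × (Fin t → ℝ)) :=
  convexHull ℝ (⋃ j, (Q j) ×ˢ ({cayleyVec t j} : Set (Fin t → ℝ)))

/-- `P ⊆ ℝⁿ` is a Cayley polytope `P₀ * ⋯ * P_t` of length `t+1` of lattice polytopes
`Pⱼ ⊆ ℝᵏ` with `k + t = n`: some affine lattice isomorphism `ℤⁿ ≅ ℤᵏ × ℤᵗ`
identifies `P` with such a Cayley sum. -/
def IsCayley {n : ℕ} (P : Set (Fin n → ℝ)) (k t : ℕ) : Prop :=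
  k + t = n ∧
  ∃ Q : Fin (t + 1) → Finset (Fin k → ℤ), (∀ j, (Q j).Nonempty) ∧
  ∃ f : (Fin n → ℝ) ≃ᵃ[ℝ] (Fin k → ℝ) × (Fin t → ℝ),
    f '' IntPts n = (IntPts k) ×ˢ (IntPts t) ∧
    f '' P = cayleySum (fun j =>
      convexHull ℝ ((fun z : Fin k → ℤ => fun i => ((z i : ℝ))) '' (Q j : Set (Fin k → ℤ))))

/-- The unimodular simplex `Δₙ = conv(0, e₁, …, eₙ)`. -/
def unimodSimplex (n : ℕ) : Set (Fin n → ℝ) :=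
  convexHull ℝ (insert (0 : Fin n → ℝ) (Set.range (stdBasisVec n)))

/-- Two subsets of `ℝⁿ` are unimodularly equivalent: an affine lattice automorphism
maps one onto the other. -/
def UnimodEquiv {n : ℕ} (P P' : Set (Fin n → ℝ)) : Prop :=
  ∃ f : (Fin n → ℝ) ≃ᵃ[ℝ] (Fin n → ℝ), f '' IntPts n = IntPts n ∧ f '' P = P'

/-- The codegree `cd(P) = min {k ∈ ℕ, k ≥ 1 : int(kP) ∩ ℤⁿ ≠ ∅}` of a polytope given
as a set. -/
def codegS {n : ℕ} (P : Set (Fin n → ℝ)) : ℕ :=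
  sInf {k : ℕ | 0 < k ∧ ∃ z : Fin n → ℤ, (fun j => (z j : ℝ)) ∈ interior ((k : ℝ) • P)}

/-- `P` has lattice width one: some nonzero integer linear functional has minimum `c`
and maximum `c + 1` on `P`. -/
def HasLatticeWidthOne {n : ℕ} (P : Set (Fin n → ℝ)) : Prop :=
  ∃ u : Fin n → ℤ, u ≠ 0 ∧ ∃ c : ℤ,
    (∀ x ∈ P, (c : ℝ) ≤ ipair u x ∧ ipair u x ≤ (c : ℝ) + 1) ∧
    (∃ x ∈ P, ipair u x = (c : ℝ)) ∧ (∃ x ∈ P, ipair u x = (c : ℝ) + 1)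

/-- `P` is a lattice pyramid: for some primitive `u`, `P` is the convex hull of a base
lying in the lattice hyperplane `{⟨u, ·⟩ = c}` and an apex at lattice distance one from
it (this is equivalent to being unimodularly equivalent to
`conv((Q × {0}) ∪ {(0, …, 0, 1)})` for an `(n-1)`-dimensional lattice polytope `Q`). -/
def IsLatticePyramid {n : ℕ} (P : Set (Fin n → ℝ)) : Prop :=
  ∃ u : Fin n → ℤ, IsPrimitive u ∧ ∃ c : ℤ, ∃ apex ∈ P,
    ipair u apex = (c : ℝ) + 1 ∧
    P = convexHull ℝ ({x ∈ P | ipair u x = (c : ℝ)} ∪ {apex})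

/-- `F` is a facet of `S`: an exposed face of dimension `dim S - 1`. -/
def IsFacetOf {n : ℕ} (F S : Set (Fin n → ℝ)) : Prop :=
  IsExposed ℝ S F ∧ F.Nonempty ∧ setDim F + 1 = setDim S

/-!
The adjoint polytope `P⁽ˢ⁾` is the polyhedron cut out by the shifted inequalities
`⟨aᵢ, x⟩ ≥ bᵢ + s`.

(i) Let `G` be a facet of a polyhedron and `I` the set of inequalities tight on all of `G`.
Averaging points of `G` gives a point of `G` at which every other inequality is strict, and
extremality of `G` then forces `G = P ∩ ⋂_{i ∈ I} {tight}`. As `G ≠ P`, some `i ∈ I` is not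
tight on all of `P`; its tight set contains `G` and has smaller dimension than `P`, so it is `G`.

(ii) By (i), each facet of an irredundant description `D'` of `P⁽ˢ⁾` is some `Fⱼ⁽ˢ⁾`, and
the primitive normal of a hyperplane is unique up to sign, so every inequality of `D'` is
(a weakening of) some `⟨aⱼ, x⟩ ≥ bⱼ + s`; this gives `d_{P⁽ˢ⁾} ≥ d_P - s`. Conversely, if
`d_P(x) = d_{Fᵢ}(x) > s`, the segment from `x` to a relative interior point of `Fᵢ` meets
`Fᵢ⁽ˢ⁾` in a point at which only the `i`-th shifted inequality is tight. That point lies on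
a facet of `D'`, which can only be `Fᵢ⁽ˢ⁾`, so `d_{P⁽ˢ⁾}(x) ≤ d_{Fᵢ}(x) - s`.
-/

section VectorSpan

variable {k V M : Type*} [Ring k] [AddCommGroup V] [Module k V] [AddCommGroup M] [Module k M]
  {l : V →ₗ[k] M} {a : M} {S T : Set V}

lemma vectorSpan_le_ker_of_forall_eq (h : ∀ x ∈ S, l x = a) :
    vectorSpan k S ≤ LinearMap.ker l := by
  rw [vectorSpan_def, Submodule.span_le]
  rintro _ ⟨x, hx, y, hy, rfl⟩
  simp [h x hx, h y hy]

lemma vectorSpan_lt_of_forall_eq (hST : S ⊆ T) (h : ∀ x ∈ S, l x = a) {x q : V} (hx : x ∈ S)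
    (hq : q ∈ T) (hqa : l q ≠ a) : vectorSpan k S < vectorSpan k T := by
  refine (vectorSpan_mono k hST).lt_of_ne fun hspan => hqa ?_
  have hmem : q -ᵥ x ∈ vectorSpan k S := hspan ▸ vsub_mem_vectorSpan k hq (hST hx)
  have := vectorSpan_le_ker_of_forall_eq h hmem
  rw [LinearMap.mem_ker, vsub_eq_sub, map_sub, sub_eq_zero] at this
  rw [this, h x hx]

end VectorSpan

lemma LinearMap.exists_eq_smul_of_ker_le {k V : Type*} [Field k] [AddCommGroup V] [Module k V]
    {f g : V →ₗ[k] k} (h : LinearMap.ker f ≤ LinearMap.ker g) : ∃ r : k, g = r • f := by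
  have hg := mem_span_of_iInf_ker_le_ker (L := fun _ : Unit => f) (by simpa using h)
  rw [Set.range_const, Submodule.mem_span_singleton] at hg
  exact hg.imp fun r hr => hr.symm

section Polyhedron

open Module

variable {E ι : Type*} [NormedAddCommGroup E] [NormedSpace ℝ E]

def polyhedron (f : ι → E →L[ℝ] ℝ) (c : ι → ℝ) : Set E := {x | ∀ i, c i ≤ f i x}

variable {f : ι → E →L[ℝ] ℝ} {c : ι → ℝ}

lemma convex_polyhedron : Convex ℝ (polyhedron f c) := by
  intro x hx y hy a b ha hb hab i
  simp only [map_add, map_smul, smul_eq_mul]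
  calc c i = a * c i + b * c i := by rw [← add_mul, hab, one_mul]
    _ ≤ a * f i x + b * f i y := by gcongr <;> [exact hx i; exact hy i]

lemma isClosed_polyhedron : IsClosed (polyhedron f c) := by
  simpa only [polyhedron, Set.ofPred_forall] using
    isClosed_iInter fun i => isClosed_le continuous_const (f i).continuous

lemma ContinuousLinearMap.eq_zero_of_isMinOn {l : E →L[ℝ] ℝ} {S : Set E} {x : E}
    (hx : x ∈ interior S) (hmin : IsMinOn l S x) : l = 0 :=
  (hmin.isLocalMin (mem_interior_iff_mem_nhds.mp hx)).hasFDerivAt_eq_zero l.hasFDerivAt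

lemma interior_polyhedron [Finite ι] (hf : ∀ i, f i ≠ 0) :
    interior (polyhedron f c) = {x | ∀ i, c i < f i x} := by
  apply subset_antisymm
  · intro x hx i
    refine lt_of_le_of_ne (interior_subset hx i) fun hxi => hf i ?_
    exact ContinuousLinearMap.eq_zero_of_isMinOn hx fun y hy => by simpa [← hxi] using hy i
  · refine interior_maximal (fun x hx i => (hx i).le) ?_
    simpa only [Set.ofPred_forall] using
      isOpen_iInter_of_finite fun i => isOpen_lt continuous_const (f i).continuous

lemma exists_add_smul_sub_mem_polyhedron [Finite ι] {g y : E}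
    (h : ∀ i, c i < f i g ∨ f i g = c i ∧ f i y = c i) :
    ∃ ε : ℝ, 0 < ε ∧ g + ε • (g - y) ∈ polyhedron f c := by
  have hev : ∀ i, ∀ᶠ ε in nhdsWithin (0 : ℝ) (Set.Ioi 0), c i ≤ f i (g + ε • (g - y)) := by
    intro i
    simp only [map_add, map_smul, map_sub, smul_eq_mul]
    rcases h i with hlt | ⟨hg, hy⟩
    · have hcont : Continuous fun ε : ℝ => f i g + ε * (f i g - f i y) := by fun_prop
      refine nhdsWithin_le_nhds ((hcont.tendsto' 0 (f i g) (by simp)).eventually ?_)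
      exact eventually_ge_nhds hlt
    · exact Filter.Eventually.of_forall fun ε => by simp [hg, hy]
  obtain ⟨ε, hε, hεpos⟩ := ((Filter.eventually_all.2 hev).and self_mem_nhdsWithin).exists
  exact ⟨ε, hεpos, hε⟩

lemma mem_openSegment_add_smul_sub {g y : E} {ε : ℝ} (hε : 0 < ε) :
    g ∈ openSegment ℝ y (g + ε • (g - y)) := by
  refine ⟨ε / (1 + ε), 1 / (1 + ε), by positivity, by positivity, by field_simp; ring, ?_⟩
  match_scalars <;> field_simp; ring

lemma Convex.exists_forall_lt {G : Set E} (hG : Convex ℝ G) (hne : G.Nonempty)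
    (s : Finset ι) (hle : ∀ i ∈ s, ∀ g ∈ G, c i ≤ f i g)
    (hlt : ∀ i ∈ s, ∃ g ∈ G, c i < f i g) : ∃ g ∈ G, ∀ i ∈ s, c i < f i g := by
  classical
  induction s using Finset.induction_on with
  | empty => obtain ⟨g, hg⟩ := hne; exact ⟨g, hg, by simp⟩
  | insert j s hj ih =>
    obtain ⟨g, hgG, hg⟩ := ih (fun i hi => hle i (Finset.mem_insert_of_mem hi))
      (fun i hi => hlt i (Finset.mem_insert_of_mem hi))
    obtain ⟨g', hg'G, hg'⟩ := hlt j (Finset.mem_insert_self j s)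
    refine ⟨(1 / 2 : ℝ) • g + (1 / 2 : ℝ) • g', hG hgG hg'G (by norm_num) (by norm_num)
      (by norm_num), fun i hi => ?_⟩
    have hgi := hle i hi g hgG
    have hg'i := hle i hi g' hg'G
    simp only [map_add, map_smul, smul_eq_mul]
    rcases Finset.mem_insert.1 hi with rfl | hi
    · linarith
    · linarith [hg i hi]

lemma isExposed_setOf_eq_of_le {S : Set E} {l : E →L[ℝ] ℝ} {β : ℝ} (h : ∀ y ∈ S, β ≤ l y) :
    IsExposed ℝ S {x ∈ S | l x = β} := by
  rintro ⟨z, hzS, hzβ⟩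
  refine ⟨-l, Set.ext fun x => ⟨fun ⟨hxS, hxβ⟩ => ⟨hxS, fun y hy => ?_⟩,
    fun ⟨hxS, hmax⟩ => ⟨hxS, le_antisymm ?_ (h x hxS)⟩⟩⟩
  · simpa [hxβ] using h y hy
  · simpa [hzβ] using hmax z hzS

variable [Finite ι]

lemma IsExtreme.mem_of_mem_polyhedron {G : Set E} (hG : IsExtreme ℝ (polyhedron f c) G)
    {g y : E} (hg : g ∈ G) (hy : y ∈ polyhedron f c)
    (h : ∀ i, c i < f i g ∨ f i g = c i ∧ f i y = c i) : y ∈ G := by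
  obtain ⟨ε, hε, hmem⟩ := exists_add_smul_sub_mem_polyhedron h
  exact hG.left_mem_of_mem_openSegment hy hmem hg (mem_openSegment_add_smul_sub hε)

theorem exists_eq_of_isExtreme_polyhedron [FiniteDimensional ℝ E] {G : Set E}
    (hG : IsExtreme ℝ (polyhedron f c) G) (hGc : Convex ℝ G) (hne : G.Nonempty)
    (hdim : finrank ℝ (vectorSpan ℝ G) + 1 = finrank ℝ (vectorSpan ℝ (polyhedron f c))) :
    ∃ i, G = {x ∈ polyhedron f c | f i x = c i} := by
  classical
  have := Fintype.ofFinite ι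
  set P := polyhedron f c
  set I := Finset.univ.filter fun i => ∀ x ∈ G, f i x = c i
  have hI : ∀ i ∈ I, ∀ x ∈ G, f i x = c i := fun i hi => (Finset.mem_filter.1 hi).2
  obtain ⟨g, hgG, hg⟩ : ∃ g ∈ G, ∀ i ∈ Iᶜ, c i < f i g := by
    refine hGc.exists_forall_lt hne Iᶜ (fun i _ x hx => hG.subset hx i) fun i hi => ?_
    simp only [I, Finset.mem_compl, Finset.mem_filter, Finset.mem_univ, true_and] at hi
    push Not at hi
    obtain ⟨x, hx, hxi⟩ := hi
    exact ⟨x, hx, (hG.subset hx i).lt_of_ne hxi.symm⟩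
  have hPI : ∀ y ∈ P, (∀ i ∈ I, f i y = c i) → y ∈ G := fun y hy hyI =>
    hG.mem_of_mem_polyhedron hgG hy fun i =>
      if hi : i ∈ I then Or.inr ⟨hI i hi g hgG, hyI i hi⟩
      else Or.inl (hg i (Finset.mem_compl.2 hi))
  obtain ⟨i, hiI, q, hqP, hq⟩ : ∃ i ∈ I, ∃ q ∈ P, c i < f i q := by
    by_contra! h
    have hGP : G = P := hG.subset.antisymm fun y hy =>
      hPI y hy fun i hi => le_antisymm (h i hi y hy) (hy i)
    rw [hGP] at hdim
    omega
  have hGF : G ⊆ {x ∈ P | f i x = c i} := fun x hx => ⟨hG.subset hx, hI i hiI x hx⟩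
  refine ⟨i, hGF.antisymm fun y hy => hPI y hy.1 fun j hj => ?_⟩
  -- `G` has codimension one in `P`, as does the facet `{f i = c i}` containing it
  have hspan : vectorSpan ℝ G = vectorSpan ℝ {x ∈ P | f i x = c i} := by
    have hlt := Submodule.finrank_lt_finrank_of_lt <|
      vectorSpan_lt_of_forall_eq (l := (f i : E →ₗ[ℝ] ℝ)) (fun x hx => hx.1) (fun x hx => hx.2)
        (hGF hgG) hqP hq.ne'
    have hle := Submodule.finrank_mono (vectorSpan_mono ℝ hGF)
    exact Submodule.eq_of_le_of_finrank_eq (vectorSpan_mono ℝ hGF) (by omega)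
  have hmem : y -ᵥ g ∈ vectorSpan ℝ G := hspan ▸ vsub_mem_vectorSpan ℝ hy (hGF hgG)
  have := vectorSpan_le_ker_of_forall_eq (l := (f j : E →ₗ[ℝ] ℝ)) (hI j hj) hmem
  rw [LinearMap.mem_ker, vsub_eq_sub, map_sub, sub_eq_zero] at this
  rw [← hI j hj g hgG]
  exact this

end Polyhedron

section Lattice

variable {n : ℕ}

def ipairCLM (a : Fin n → ℤ) : (Fin n → ℝ) →L[ℝ] ℝ :=
  ∑ j, (a j : ℝ) • ContinuousLinearMap.proj j

@[simp] lemma ipairCLM_apply (a : Fin n → ℤ) (x : Fin n → ℝ) : ipairCLM a x = ipair a x := by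
  simp [ipairCLM, ipair]

lemma ipair_single (a : Fin n → ℤ) (j : Fin n) : ipair a (Pi.single j 1) = a j := by
  simp [ipair, Pi.single_apply]

lemma ipairCLM_ne_zero {a : Fin n → ℤ} (ha : a ≠ 0) : ipairCLM a ≠ 0 := fun h =>
  ha <| funext fun j => by
    simpa [ipair_single] using congrArg (fun l : (Fin n → ℝ) →L[ℝ] ℝ => l (Pi.single j 1)) h

lemma IsPrimitive.isUnit_of_forall_dvd {a : Fin n → ℤ} (ha : IsPrimitive a) {d : ℤ}
    (h : ∀ j, d ∣ a j) : IsUnit d :=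
  ha.2 d (fun j => a j / d) (funext fun j => (Int.mul_ediv_cancel' (h j)).symm)

lemma IsPrimitive.eq_of_cast_eq_mul {a a' : Fin n → ℤ} (ha : IsPrimitive a)
    (ha' : IsPrimitive a') {r : ℝ} (hr : 0 < r) (h : ∀ j, (a' j : ℝ) = r * a j) : a' = a := by
  obtain ⟨j₀, hj₀⟩ : ∃ j, a j ≠ 0 := Function.ne_iff.1 ha.1
  -- `r = a' j₀ / a j₀` is rational, and primitivity makes its numerator and denominator units
  set ρ : ℚ := a' j₀ / a j₀
  have hρ : (ρ : ℝ) = r := by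
    have : (a j₀ : ℝ) ≠ 0 := by exact_mod_cast hj₀
    push_cast [ρ]
    rw [h j₀]
    field_simp
  have hmul : ∀ j, (ρ.den : ℤ) * a' j = ρ.num * a j := by
    have hnum : (ρ.num : ℝ) = r * ρ.den := by
      rw [← hρ]
      exact_mod_cast (Rat.mul_den_eq_num ρ).symm
    intro j
    have : ((ρ.den * a' j : ℤ) : ℝ) = ((ρ.num * a j : ℤ) : ℝ) := by
      push_cast
      rw [h j, hnum]
      ring
    exact_mod_cast this
  have hcop : IsCoprime (ρ.den : ℤ) ρ.num := by
    rw [Int.isCoprime_iff_gcd_eq_one]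
    simpa [Int.gcd, Nat.coprime_comm] using ρ.reduced
  have hden : (ρ.den : ℤ) = 1 := by
    have hunit := ha.isUnit_of_forall_dvd fun j => hcop.dvd_of_dvd_mul_left ⟨a' j, (hmul j).symm⟩
    rcases Int.isUnit_iff.1 hunit with h1 | h1 <;> omega
  have hnum : ρ.num = 1 := by
    have hunit := ha'.isUnit_of_forall_dvd fun j => hcop.symm.dvd_of_dvd_mul_left ⟨a j, hmul j⟩
    have hpos : 0 < ρ.num := Rat.num_pos.2 (by exact_mod_cast hρ ▸ hr)
    rcases Int.isUnit_iff.1 hunit with h1 | h1 <;> omega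
  funext j
  simpa [hden, hnum] using hmul j

lemma setDim_empty : setDim (∅ : Set (Fin n → ℝ)) = 0 := by
  simp [setDim, vectorSpan_empty]

lemma finrank_ker_ipairCLM_lt {a : Fin n → ℤ} (ha : a ≠ 0) :
    Module.finrank ℝ (LinearMap.ker (ipairCLM a : (Fin n → ℝ) →ₗ[ℝ] ℝ)) < n := by
  have hker : LinearMap.ker (ipairCLM a : (Fin n → ℝ) →ₗ[ℝ] ℝ) ≠ ⊤ := by
    rw [Ne, LinearMap.ker_eq_top]
    exact fun h0 => ipairCLM_ne_zero ha (ContinuousLinearMap.coe_injective (by simpa using h0))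
  simpa using Submodule.finrank_lt hker

lemma setDim_lt_of_forall_eq {S : Set (Fin n → ℝ)} {a : Fin n → ℤ} (ha : a ≠ 0) {β : ℝ}
    (h : ∀ y ∈ S, ipair a y = β) : setDim S < n :=
  (Submodule.finrank_mono (vectorSpan_le_ker_of_forall_eq (by simpa using h))).trans_lt
    (finrank_ker_ipairCLM_lt ha)

lemma exists_lt_of_setDim_eq {S : Set (Fin n → ℝ)} (hS : setDim S = n) {a : Fin n → ℤ}
    (ha : a ≠ 0) {β : ℝ} (h : ∀ y ∈ S, β ≤ ipair a y) : ∃ q ∈ S, β < ipair a q := by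
  by_contra! h'
  exact (setDim_lt_of_forall_eq ha fun y hy => le_antisymm (h' y hy) (h y hy)).ne hS

/-- The primitive inward normal of a codimension-one face is unique. -/
lemma IsPrimitive.eq_of_forall_eq {a a' : Fin n → ℤ} (ha : IsPrimitive a) (ha' : IsPrimitive a')
    {G : Set (Fin n → ℝ)} (hGne : G.Nonempty) (hdim : setDim G + 1 = n) {β β' : ℝ}
    (hGa : ∀ y ∈ G, ipair a y = β) (hGa' : ∀ y ∈ G, ipair a' y = β') {q : Fin n → ℝ}
    (hq : β < ipair a q) (hq' : β' ≤ ipair a' q) : a' = a ∧ β' = β := by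
  obtain ⟨g, hg⟩ := hGne
  have hspan : vectorSpan ℝ G = LinearMap.ker (ipairCLM a : (Fin n → ℝ) →ₗ[ℝ] ℝ) := by
    refine Submodule.eq_of_le_of_finrank_le (vectorSpan_le_ker_of_forall_eq (by simpa using hGa)) ?_
    have := finrank_ker_ipairCLM_lt ha.1
    unfold setDim at hdim
    omega
  obtain ⟨r, hr⟩ := LinearMap.exists_eq_smul_of_ker_le <|
    hspan ▸ vectorSpan_le_ker_of_forall_eq (l := (ipairCLM a' : (Fin n → ℝ) →ₗ[ℝ] ℝ))
      (by simpa using hGa')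
  have hr' : ∀ x, ipair a' x = r * ipair a x := fun x => by
    simpa using LinearMap.congr_fun hr x
  have hββ' : β' = r * β := by rw [← hGa' g hg, ← hGa g hg, hr']
  have hr0 : r ≠ 0 := fun h0 => ha'.1 <| funext fun j => by
    simpa [ipair_single, h0] using hr' (Pi.single j 1)
  have hrpos : 0 < r := by
    refine lt_of_le_of_ne ?_ hr0.symm
    by_contra! hneg
    nlinarith [hr' q]
  have haa := ha.eq_of_cast_eq_mul ha' hrpos fun j => by
    simpa [ipair_single] using hr' (Pi.single j 1)
  exact ⟨haa, by rw [← hGa' g hg, haa, hGa g hg]⟩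

end Lattice

namespace PolyDesc

variable {n m : ℕ} (D : PolyDesc n m) {s : ℝ} {x : Fin n → ℝ}

lemma dist_le (i : Fin m) : D.dist x ≤ D.dF i x := Finset.inf'_le _ (Finset.mem_univ i)

lemma le_dist_iff : s ≤ D.dist x ↔ ∀ i, s ≤ D.dF i x := by
  simp [dist, Finset.le_inf'_iff]

lemma exists_dist_eq (x : Fin n → ℝ) : ∃ i, D.dist x = D.dF i x := by
  obtain ⟨i, -, hi⟩ := Finset.exists_mem_eq_inf' _ fun i => D.dF i x
  exact ⟨i, hi⟩

lemma le_dF_iff {i : Fin m} : s ≤ D.dF i x ↔ D.b i + s ≤ ipair (D.A i) x := by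
  rw [dF, le_sub_iff_add_le']

lemma dF_eq_iff {i : Fin m} : D.dF i x = s ↔ ipair (D.A i) x = D.b i + s := by
  rw [dF, sub_eq_iff_eq_add']

lemma dF_add_smul (i : Fin m) (t : ℝ) (x p : Fin n → ℝ) :
    D.dF i ((1 - t) • x + t • p) = (1 - t) * D.dF i x + t * D.dF i p := by
  simp only [dF, ← ipairCLM_apply, map_add, map_smul, smul_eq_mul]
  ring

lemma pts_eq_polyhedron : D.pts = polyhedron (fun i => ipairCLM (D.A i)) (fun i => D.b i) := by
  ext x
  simp [pts, polyhedron]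

lemma adj_eq_polyhedron :
    D.adj s = polyhedron (fun i => ipairCLM (D.A i)) (fun i => D.b i + s) := by
  ext x
  simp [adj, polyhedron, le_dist_iff, le_dF_iff]

lemma interior_pts : interior D.pts = {x | ∀ i, 0 < D.dF i x} := by
  rw [pts_eq_polyhedron, interior_polyhedron fun i => ipairCLM_ne_zero (D.prim i).1]
  simp [dF]

lemma interior_adj : interior (D.adj s) = {x | ∀ i, s < D.dF i x} := by
  rw [adj_eq_polyhedron, interior_polyhedron fun i => ipairCLM_ne_zero (D.prim i).1]
  simp [dF, lt_sub_iff_add_lt']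

lemma exists_dF_nonpos (hx : x ∉ interior D.pts) : ∃ i, D.dF i x ≤ 0 := by
  simpa [interior_pts] using hx

lemma isCompact_pts : IsCompact D.pts :=
  Metric.isCompact_of_isClosed_isBounded (D.pts_eq_polyhedron ▸ isClosed_polyhedron) D.bounded

lemma isExposed_facet (i : Fin m) : IsExposed ℝ D.pts (D.facet i) := by
  have := isExposed_setOf_eq_of_le (S := D.pts) (l := ipairCLM (D.A i)) (β := D.b i)
    fun y hy => by simpa using hy i
  simpa [facet] using this

lemma exists_facet_nonempty (i : Fin m) :
    ∃ i', D.A i' = D.A i ∧ D.b i ≤ D.b i' ∧ (D.facet i').Nonempty := by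
  by_cases hne : (D.facet i).Nonempty
  · exact ⟨i, rfl, le_rfl, hne⟩
  -- only in dimension one can a facet inequality have empty tight set
  have hn : n = 1 := by
    have : setDim (D.facet i) + 1 = n := D.facet_dim i
    rw [Set.not_nonempty_iff_eq_empty.1 hne, setDim_empty] at this
    omega
  have hPne : D.pts.Nonempty := Set.nonempty_iff_ne_empty.2 fun h => by
    have : setDim D.pts = n := D.fulldim
    rw [h, setDim_empty] at this
    omega
  obtain ⟨y, hy, hmin⟩ :=
    D.isCompact_pts.exists_isMinOn hPne (ipairCLM (D.A i)).continuous.continuousOn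
  obtain ⟨k, hk⟩ := D.exists_dF_nonpos fun hint =>
    ipairCLM_ne_zero (D.prim i).1 ((ipairCLM (D.A i)).eq_zero_of_isMinOn hint hmin)
  have hyk : ipair (D.A k) y = D.b k := by
    have := hy k
    simp only [dF] at hk
    linarith
  obtain ⟨q, hqP, hq⟩ := exists_lt_of_setDim_eq D.fulldim (D.prim k).1 fun z hz => hz k
  -- in dimension one, the point `{y}` is a codimension-one face
  obtain ⟨hA, hb⟩ := (D.prim k).eq_of_forall_eq (D.prim i) (Set.singleton_nonempty y)
    (by simp [setDim, hn]) (β' := ipair (D.A i) y) (by simpa using hyk) (by simp) hq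
    (by simpa using hmin hqP)
  refine ⟨k, hA.symm, ?_, y, hy, hyk⟩
  have : (D.b i : ℝ) ≤ D.b k := hb ▸ hy i
  exact_mod_cast this

lemma facet_nonempty_of_dist_eq {i : Fin m} (hi : D.dist x = D.dF i x) : (D.facet i).Nonempty := by
  obtain ⟨i', hA, hb, hne⟩ := D.exists_facet_nonempty i
  have hb' : D.b i' ≤ D.b i := by
    have := D.dist_le (x := x) i'
    rw [hi, dF, dF, hA] at this
    exact_mod_cast (sub_le_sub_iff_left _).1 this
  rwa [D.irredundant (Prod.ext hA (hb'.antisymm hb))] at hne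

lemma exists_mem_facet_forall_lt {i : Fin m} (hne : (D.facet i).Nonempty) :
    ∃ p ∈ D.facet i, ∀ j ≠ i, 0 < D.dF j p := by
  have hconv : Convex ℝ (D.facet i) :=
    (D.isExposed_facet i).convex (D.pts_eq_polyhedron ▸ convex_polyhedron)
  have hlt : ∀ j ∈ Finset.univ.erase i, ∃ p ∈ D.facet i, (D.b j : ℝ) < ipairCLM (D.A j) p := by
    intro j hj
    -- otherwise the facet `i` also lies on the hyperplane of the inequality `j`
    by_contra! h
    obtain ⟨q, hqP, hq⟩ := exists_lt_of_setDim_eq D.fulldim (D.prim i).1 fun z hz => hz i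
    obtain ⟨hA, hb⟩ := (D.prim i).eq_of_forall_eq (D.prim j) hne (D.facet_dim i)
      (fun y hy => hy.2) (fun y hy => le_antisymm (by simpa using h y hy) (hy.1 j)) hq (hqP j)
    exact (Finset.mem_erase.1 hj).1 (D.irredundant (Prod.ext hA (by exact_mod_cast hb)))
  obtain ⟨p, hp, hpj⟩ := hconv.exists_forall_lt (f := fun j => ipairCLM (D.A j))
    (c := fun j => D.b j) hne _ (fun j _ y hy => by simpa using hy.1 j) hlt
  exact ⟨p, hp, fun j hj => by simpa [dF] using hpj j (Finset.mem_erase.2 ⟨hj, Finset.mem_univ j⟩)⟩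

theorem exists_eq_of_isFacetOf_adj {G : Set (Fin n → ℝ)} (hG : IsFacetOf G (D.adj s)) :
    ∃ i, G = {x ∈ D.adj s | D.dF i x = s} := by
  obtain ⟨hexp, hne, hdim⟩ := hG
  rw [adj_eq_polyhedron] at hexp hdim
  obtain ⟨i, hi⟩ := exists_eq_of_isExtreme_polyhedron hexp.isExtreme
    (hexp.convex convex_polyhedron) hne hdim
  exact ⟨i, by simp [hi, adj_eq_polyhedron, dF_eq_iff]⟩

lemma exists_mem_adj_dF_eq (hs : 0 ≤ s) {i : Fin m}
    (hi : D.dist x = D.dF i x) (hsx : s < D.dist x) :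
    ∃ z ∈ D.adj s, D.dF i z = s ∧ ∀ j ≠ i, s < D.dF j z := by
  obtain ⟨p, ⟨hpP, hpb⟩, hpj⟩ := D.exists_mem_facet_forall_lt (D.facet_nonempty_of_dist_eq hi)
  have hpi : D.dF i p = 0 := by simp [dF, hpb]
  have hp : ∀ j, 0 ≤ D.dF j p := fun j => by simpa [dF] using hpP j
  -- move from `x` towards `p` until the distance to the facet `i` drops to `s`
  set t := (D.dist x - s) / D.dist x
  have hdpos : 0 < D.dist x := hs.trans_lt hsx
  have ht : 0 < t := div_pos (by linarith) hdpos
  have ht' : (1 - t) * D.dist x = s := by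
    rw [sub_mul, one_mul, div_mul_cancel₀ _ hdpos.ne']
    ring
  have h1t : 0 ≤ 1 - t := by nlinarith
  have hle : ∀ j, s ≤ (1 - t) * D.dF j x := fun j => ht' ▸
    mul_le_mul_of_nonneg_left (D.dist_le j) h1t
  refine ⟨(1 - t) • x + t • p, D.le_dist_iff.2 fun j => ?_, ?_, fun j hj => ?_⟩ <;>
    rw [dF_add_smul]
  · nlinarith [hle j, hp j]
  · rw [hpi, ← hi, ht']
    ring
  · nlinarith [hle j, hpj j hj]

variable {m' : ℕ}

lemma exists_eq_of_facet_nonempty (hQ : setDim (D.adj s) = n) (D' : PolyDesc n m')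
    (hD' : D'.pts = D.adj s) {k : Fin m'} (hk : (D'.facet k).Nonempty) :
    ∃ j, D'.A k = D.A j ∧ (D'.b k : ℝ) = D.b j + s := by
  have hfacet : IsFacetOf (D'.facet k) (D.adj s) :=
    ⟨hD' ▸ D'.isExposed_facet k, hk, by rw [hQ]; exact D'.facet_dim k⟩
  obtain ⟨j, hj⟩ := D.exists_eq_of_isFacetOf_adj hfacet
  obtain ⟨q, hqQ, hq⟩ := exists_lt_of_setDim_eq hQ (D.prim j).1 (β := D.b j + s)
    fun y hy => D.le_dF_iff.1 (D.le_dist_iff.1 hy j)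
  have hGj : ∀ y ∈ D'.facet k, ipair (D.A j) y = D.b j + s := fun y hy =>
    D.dF_eq_iff.1 (hj ▸ hy).2
  obtain ⟨hA, hb⟩ := (D.prim j).eq_of_forall_eq (D'.prim k) hk (D'.facet_dim k) hGj
    (fun y hy => hy.2) hq ((hD' ▸ hqQ : q ∈ D'.pts) k)
  exact ⟨j, hA, hb⟩

lemma exists_eq_of_relint (hQ : setDim (D.adj s) = n) (D' : PolyDesc n m')
    (hD' : D'.pts = D.adj s) {i : Fin m} {z : Fin n → ℝ} (hz : z ∈ D.adj s) (hzi : D.dF i z = s)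
    (hzj : ∀ j ≠ i, s < D.dF j z) : ∃ k, D'.A k = D.A i ∧ (D'.b k : ℝ) = D.b i + s := by
  have hzQ : z ∉ interior D'.pts := by
    rw [hD', interior_adj]
    exact fun h => (h i).ne' hzi
  obtain ⟨k, hk⟩ := D'.exists_dF_nonpos hzQ
  have hzk : ipair (D'.A k) z = D'.b k :=
    le_antisymm (by simpa [dF] using hk) ((hD' ▸ hz : z ∈ D'.pts) k)
  obtain ⟨j, hA, hb⟩ := D.exists_eq_of_facet_nonempty hQ D' hD' ⟨z, hD' ▸ hz, hzk⟩
  have hzj' : D.dF j z = s := by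
    rw [dF, ← hA, hzk, hb]
    ring
  obtain rfl : j = i := by_contra fun hji => (hzj j hji).ne' hzj'
  exact ⟨k, hA, hb⟩

theorem dist_of_mem_adj (hs : 0 ≤ s) (hQ : setDim (D.adj s) = n) (D' : PolyDesc n m')
    (hD' : D'.pts = D.adj s) (hx : x ∈ D.adj s) : D'.dist x = D.dist x - s := by
  refine le_antisymm ?_ (D'.le_dist_iff.2 fun k => ?_)
  · obtain ⟨i, hi⟩ := D.exists_dist_eq x
    rcases (show s ≤ D.dist x from hx).eq_or_lt with hxs | hxs
    · obtain ⟨k, hk⟩ := D'.exists_dF_nonpos (x := x) <| by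
        rw [hD', interior_adj]
        exact fun h => (h i).ne' (hi ▸ hxs.symm)
      linarith [D'.dist_le (x := x) k]
    · obtain ⟨z, hz, hzi, hzj⟩ := D.exists_mem_adj_dF_eq hs hi hxs
      obtain ⟨k, hA, hb⟩ := D.exists_eq_of_relint hQ D' hD' hz hzi hzj
      calc D'.dist x ≤ D'.dF k x := D'.dist_le k
        _ = D.dist x - s := by rw [hi, dF, dF, hA, hb]; ring
  · obtain ⟨k', hA, hb, hne⟩ := D'.exists_facet_nonempty k
    obtain ⟨j, hAj, hbj⟩ := D.exists_eq_of_facet_nonempty hQ D' hD' hne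
    have hbk : (D'.b k : ℝ) ≤ D'.b k' := by exact_mod_cast hb
    calc D.dist x - s ≤ D.dF j x - s := by linarith [D.dist_le (x := x) j]
      _ = D'.dF k' x := by rw [dF, dF, ← hAj, hA, hbj]; ring
      _ ≤ D'.dF k x := by rw [dF, dF, hA]; linarith

end PolyDesc

/-- Let `s ≥ 0`. (i) Every facet of `P⁽ˢ⁾` is of the form
`F⁽ˢ⁾ = {x ∈ P⁽ˢ⁾ : d_F(x) = s}` for some facet `F = Fᵢ` of `P`.
(ii) If `P⁽ˢ⁾` has dimension `n` and `x ∈ P⁽ˢ⁾`, then `d_{P⁽ˢ⁾}(x) = d_P(x) - s`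
(where `d_{P⁽ˢ⁾}` is computed from any irredundant facet description `D'` of `P⁽ˢ⁾`);
moreover, if `x ∈ int P⁽ˢ⁾` and `d_P(x) = d_{Fᵢ}(x)` for a facet `Fᵢ` of `P`, then
`Fᵢ⁽ˢ⁾` is a facet of `P⁽ˢ⁾` and `d_{P⁽ˢ⁾}(x) = d_{Fᵢ⁽ˢ⁾}(x) = d_{Fᵢ}(x) - s`. -/
theorem statement0 {n m : ℕ} (D : PolyDesc n m) (s : ℝ) (hs : 0 ≤ s) :
    (∀ G : Set (Fin n → ℝ), IsFacetOf G (D.adj s) →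
      ∃ i : Fin m, G = {x ∈ D.adj s | D.dF i x = s}) ∧
    (setDim (D.adj s) = n →
      ∀ {m' : ℕ} (D' : PolyDesc n m'), D'.pts = D.adj s →
        ∀ x ∈ D.adj s,
          D'.dist x = D.dist x - s ∧
          (x ∈ interior (D.adj s) → ∀ i : Fin m, D.dist x = D.dF i x →
            IsFacetOf {y ∈ D.adj s | D.dF i y = s} (D.adj s) ∧
            D'.dist x = D.dF i x - s)) := by
  refine ⟨fun G hG => D.exists_eq_of_isFacetOf_adj hG, fun hQ m' D' hD' x hx => ?_⟩
  have hdist := D.dist_of_mem_adj hs hQ D' hD' hx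
  refine ⟨hdist, fun hint i hi => ?_⟩
  have hsx : s < D.dist x := by
    obtain ⟨j, hj⟩ := D.exists_dist_eq x
    rw [D.interior_adj] at hint
    exact hj ▸ hint j
  obtain ⟨z, hz, hzi, hzj⟩ := D.exists_mem_adj_dF_eq hs hi hsx
  obtain ⟨k, hA, hb⟩ := D.exists_eq_of_relint hQ D' hD' hz hzi hzj
  have hF : {y ∈ D.adj s | D.dF i y = s} = D'.facet k := by
    ext y
    simp [PolyDesc.facet, hD', PolyDesc.dF_eq_iff, hA, hb]
  refine ⟨⟨?_, ⟨z, hz, hzi⟩, ?_⟩, by rw [hdist, hi]⟩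
  · rw [hF, ← hD']
    exact D'.isExposed_facet k
  · rw [hF, hQ]
    exact D'.facet_dim k
end
end

section
/- Let x ∈ relint(core(P)) and let F_1,…,F_t be exactly those facets of P with d_{F_i}(x) = μ(P)^{-1}, with primitive inner normals a_1,…,a_t. Then the cone positively spanned by a_1,…,a_t equals the orthogonal complement K(P)^⊥ of K(P). Moreover, if core(P) = {x}, then the set {y ∈ ℝ^n : d_{F_i}(y) ≥ 0 for all i = 1,…,t} is bounded, i.e., it is a rational polytope containing P. -/
open scoped BigOperators Pointwise

noncomputable section

/-!
Let `Q = {p | bᵢ ≤ ⟨aᵢ, p⟩}` be a polyhedron (for us the core, `Q = P^(μ(P)⁻¹)`) and `x` a point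
of its relative interior. Each functional `aᵢ` that is active at `x` attains its minimum over `Q`
at a relative interior point, so it is constant on `Q` and orthogonal to `aff Q`; hence the cone of
active normals lies in `K^⊥`. Conversely, if `y ∈ K^⊥` were outside that cone, Farkas' lemma
would give a direction `w` with `⟨aᵢ, w⟩ ≥ 0` for all active `i` and `⟨y, w⟩ < 0`. The inactive
inequalities have slack at `x`, so `x + t w ∈ Q` for small `t > 0`; then `w ∈ K`, contradicting
`⟨y, w⟩ ≠ 0`. Farkas' lemma needs finitely generated cones to be closed, which follows from the
conic Carathéodory theorem.

If the core is a point, the active normals positively span `ℝⁿ`; writing `±eⱼ` as nonnegative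
combinations of them bounds every coordinate on `{y | bᵢ ≤ ⟨aᵢ, y⟩ for active i}`.
-/

open Set Filter Topology

section IntrinsicInterior

variable {E : Type*} [NormedAddCommGroup E] [NormedSpace ℝ E] {s : Set E} {x : E}

theorem eventually_add_smul_mem_of_mem_intrinsicInterior (hx : x ∈ intrinsicInterior ℝ s)
    {v : E} (hv : v ∈ vectorSpan ℝ s) : ∀ᶠ t in 𝓝 (0 : ℝ), x + t • v ∈ s := by
  obtain ⟨y, hy, rfl⟩ := hx
  have hline (t : ℝ) : (y : E) + t • v ∈ affineSpan ℝ s := by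
    rw [← direction_affineSpan] at hv
    simpa [vadd_eq_add, add_comm] using
      AffineSubspace.vadd_mem_of_mem_direction (Submodule.smul_mem _ t hv) y.2
  let line : ℝ → affineSpan ℝ s := fun t => ⟨y + t • v, hline t⟩
  have hline0 : line 0 = y := by ext; simp [line]
  have hcont : Continuous line := by fun_prop
  filter_upwards [hcont.continuousAt.preimage_mem_nhds (hline0 ▸ isOpen_interior.mem_nhds hy)]
    with t ht using (interior_subset ht : line t ∈ Subtype.val ⁻¹' s)

theorem vectorSpan_le_ker_of_isMinOn (f : E →ₗ[ℝ] ℝ) (hx : x ∈ intrinsicInterior ℝ s)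
    (hmin : IsMinOn f s x) : vectorSpan ℝ s ≤ LinearMap.ker f := by
  have hconst : ∀ p ∈ s, f p = f x := fun p hp => by
    have hxp : x - p ∈ vectorSpan ℝ s := vsub_mem_vectorSpan ℝ (intrinsicInterior_subset hx) hp
    obtain ⟨t, hts, ht⟩ := ((eventually_add_smul_mem_of_mem_intrinsicInterior hx hxp).filter_mono
      nhdsWithin_le_nhds |>.and self_mem_nhdsWithin).exists (f := 𝓝[>] (0 : ℝ))
    have h₁ : f x ≤ f (x + t • (x - p)) := hmin hts
    have h₂ : f x ≤ f p := hmin hp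
    rw [map_add, map_smul, map_sub, smul_eq_mul] at h₁
    nlinarith
  rw [vectorSpan_def, Submodule.span_le]
  rintro _ ⟨p, hp, q, hq, rfl⟩
  simp [hconst p hp, hconst q hq]

end IntrinsicInterior

namespace PointedCone

variable {E : Type*} [AddCommGroup E] [Module ℝ E] {ι : Type*} [Fintype ι]

theorem mem_hull_image_iff {a : ι → E} {J : Set ι} {y : E} :
    y ∈ hull ℝ (a '' J) ↔
      ∃ c : ι → ℝ, (∀ i, 0 ≤ c i) ∧ (∀ i ∉ J, c i = 0) ∧ y = ∑ i, c i • a i := by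
  classical
  constructor
  · intro hy
    induction hy using Submodule.span_induction with
    | mem _ h =>
      obtain ⟨i, hi, rfl⟩ := h
      refine ⟨Pi.single i 1, fun j => ?_, fun j hj => ?_, by simp [Pi.single_apply, ite_smul]⟩
      · by_cases h : j = i <;> simp [h]
      · simp [show j ≠ i from fun h => hj (h ▸ hi)]
    | zero => exact ⟨0, fun _ => le_rfl, fun _ _ => rfl, by simp⟩
    | add _ _ _ _ h₁ h₂ =>
      obtain ⟨c₁, hc₁, hJ₁, rfl⟩ := h₁
      obtain ⟨c₂, hc₂, hJ₂, rfl⟩ := h₂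
      exact ⟨c₁ + c₂, fun i => add_nonneg (hc₁ i) (hc₂ i), fun i hi => by simp [hJ₁ i hi, hJ₂ i hi],
        by simp [add_smul, Finset.sum_add_distrib]⟩
    | smul r _ _ h =>
      obtain ⟨c, hc, hJ, rfl⟩ := h
      exact ⟨(r : ℝ) • c, fun i => mul_nonneg r.2 (hc i), fun i hi => by simp [hJ i hi],
        by simp [← Nonneg.coe_smul, Finset.smul_sum, smul_smul]⟩
  · rintro ⟨c, hc, hcJ, rfl⟩
    refine Submodule.sum_mem _ fun i _ => ?_
    by_cases hi : i ∈ J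
    · exact smul_mem _ (hc i) (subset_hull (mem_image_of_mem a hi))
    · simp [hcJ i hi]

theorem mem_hull_range_iff {a : ι → E} {y : E} :
    y ∈ hull ℝ (range a) ↔ ∃ c : ι → ℝ, (∀ i, 0 ≤ c i) ∧ y = ∑ i, c i • a i := by
  simp [← image_univ, mem_hull_image_iff]

theorem exists_coeff_eq_zero_of_not_linearIndependent {a : ι → E} (ha : ¬LinearIndependent ℝ a)
    {c : ι → ℝ} (hc : ∀ i, 0 ≤ c i) :
    ∃ c' : ι → ℝ, (∀ i, 0 ≤ c' i) ∧ (∃ j, c' j = 0) ∧ ∑ i, c' i • a i = ∑ i, c i • a i := by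
  classical
  obtain ⟨g, hg, hpos⟩ : ∃ g : ι → ℝ, ∑ i, g i • a i = 0 ∧ ∃ j, 0 < g j := by
    obtain ⟨g, hg, j, hj⟩ := Fintype.not_linearIndependent_iff.mp ha
    rcases hj.lt_or_gt with hj | hj
    · exact ⟨-g, by simp [hg], j, by simpa using hj⟩
    · exact ⟨g, hg, j, hj⟩
  obtain ⟨j, hj⟩ := hpos
  -- `c k / g k` is the largest `t` with `c - t • g ≥ 0`
  obtain ⟨k, hk, hmin⟩ := (Finset.univ.filter (0 < g ·)).exists_min_image (fun i => c i / g i)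
    ⟨j, by simpa using hj⟩
  simp only [Finset.mem_filter, Finset.mem_univ, true_and] at hk hmin
  refine ⟨fun i => c i - c k / g k * g i, fun i => ?_, ⟨k, by field_simp; ring⟩, ?_⟩
  · show 0 ≤ c i - c k / g k * g i
    rcases lt_or_ge 0 (g i) with hi | hi
    · linarith [(le_div_iff₀ hi).mp (hmin i hi)]
    · linarith [hc i, mul_nonneg (div_nonneg (hc k) hk.le) (neg_nonneg.mpr hi)]
  · simp only [sub_smul, Finset.sum_sub_distrib, mul_smul, ← Finset.smul_sum, hg, smul_zero,
      sub_zero]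

theorem hull_range_eq_iUnion_of_not_linearIndependent {a : ι → E} (ha : ¬LinearIndependent ℝ a) :
    (hull ℝ (range a) : Set E) = ⋃ j : ι, hull ℝ (range fun i : {i // i ≠ j} => a i) := by
  classical
  refine subset_antisymm (fun y hy => ?_) (iUnion_subset fun j => Submodule.span_mono ?_)
  · obtain ⟨c, hc, rfl⟩ := mem_hull_range_iff.mp hy
    obtain ⟨c', hc', ⟨j, hj⟩, hsum⟩ := exists_coeff_eq_zero_of_not_linearIndependent ha hc
    refine mem_iUnion.mpr ⟨j, mem_hull_range_iff.mpr ⟨fun i => c' i, fun i => hc' i, ?_⟩⟩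
    rw [← hsum, Fintype.sum_eq_add_sum_subtype_ne _ j, hj, zero_smul, zero_add]
  · rintro _ ⟨i, rfl⟩
    exact ⟨i, rfl⟩

end PointedCone

namespace PointedCone

variable {E : Type*} [NormedAddCommGroup E] [NormedSpace ℝ E] {ι : Type*} [Fintype ι]

theorem isClosed_hull_range (a : ι → E) :
    IsClosed (hull ℝ (range a) : Set E) := by
  classical
  induction hcard : Fintype.card ι using Nat.strong_induction_on generalizing ι with
  | _ k ih =>
  by_cases ha : LinearIndependent ℝ a
  · have hinj : LinearMap.ker (Fintype.linearCombination ℝ a) = ⊥ :=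
      LinearMap.ker_eq_bot'.mpr fun c hc => funext <|
        Fintype.linearIndependent_iff.mp ha c (by simpa [Fintype.linearCombination_apply] using hc)
    have hcone : (hull ℝ (range a) : Set E) = Fintype.linearCombination ℝ a '' Ici 0 := by
      ext y
      simp [mem_hull_range_iff, Fintype.linearCombination_apply, eq_comm, Pi.le_def]
    rw [hcone]
    exact (LinearMap.isClosedEmbedding_of_injective hinj).isClosedMap _ isClosed_Ici
  · rw [hull_range_eq_iUnion_of_not_linearIndependent ha]
    refine isClosed_iUnion_of_finite fun j => ih _ ?_ _ rfl
    exact hcard ▸ Fintype.card_subtype_lt (p := (· ≠ j)) (not_not.mpr rfl)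

end PointedCone

section Polyhedron

variable {σ ι : Type*} [Fintype σ]

theorem exists_dotProduct_nonneg_of_notMem_hull {s : Set (σ → ℝ)} (hs : s.Finite)
    {y : σ → ℝ} (hy : y ∉ PointedCone.hull ℝ s) :
    ∃ w : σ → ℝ, (∀ v ∈ s, 0 ≤ v ⬝ᵥ w) ∧ y ⬝ᵥ w < 0 := by
  classical
  have : Fintype s := hs.fintype
  have hclosed : IsClosed (PointedCone.hull ℝ s : Set (σ → ℝ)) := by
    simpa using PointedCone.isClosed_hull_range ((↑) : s → σ → ℝ)
  obtain ⟨f, hf, hfy⟩ := ProperCone.hyperplane_separation_point ⟨_, hclosed⟩ hy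
  have hw (v : σ → ℝ) : v ⬝ᵥ (dotProductEquiv ℝ σ).symm f = f v := by
    rw [dotProduct_comm, ← dotProductEquiv_apply_apply, LinearEquiv.apply_symm_apply]
    rfl
  exact ⟨_, fun v hv => hw v ▸ hf v (PointedCone.subset_hull hv), hw y ▸ hfy⟩

variable (a : ι → σ → ℝ) (b : ι → ℝ)

theorem eventually_add_smul_mem_polyhedron [Finite ι] {x w : σ → ℝ} (hx : ∀ i, b i ≤ a i ⬝ᵥ x)
    (hw : ∀ i, a i ⬝ᵥ x = b i → 0 ≤ a i ⬝ᵥ w) :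
    ∀ᶠ t in 𝓝[>] (0 : ℝ), ∀ i, b i ≤ a i ⬝ᵥ (x + t • w) := by
  refine eventually_all.mpr fun i => ?_
  simp only [dotProduct_add, dotProduct_smul, smul_eq_mul]
  rcases (hx i).eq_or_lt with hi | hi
  · filter_upwards [self_mem_nhdsWithin] with t ht
    nlinarith [hw i hi.symm, mem_Ioi.mp ht]
  · have hcont : Continuous fun t : ℝ => a i ⬝ᵥ x + t * (a i ⬝ᵥ w) := by fun_prop
    exact ((hcont.tendsto' 0 _ (by simp)).eventually_const_lt hi).filter_mono nhdsWithin_le_nhds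
      |>.mono fun _ => le_of_lt

theorem hull_active_eq_orthogonal_vectorSpan [Finite ι] {x : σ → ℝ}
    (hx : x ∈ intrinsicInterior ℝ {p | ∀ i, b i ≤ a i ⬝ᵥ p}) :
    (PointedCone.hull ℝ (a '' {i | a i ⬝ᵥ x = b i}) : Set (σ → ℝ)) =
      {y | ∀ v ∈ vectorSpan ℝ {p | ∀ i, b i ≤ a i ⬝ᵥ p}, y ⬝ᵥ v = 0} := by
  have hxQ : ∀ i, b i ≤ a i ⬝ᵥ x := intrinsicInterior_subset hx
  have hker : ∀ i, a i ⬝ᵥ x = b i → ∀ v ∈ vectorSpan ℝ {p | ∀ i, b i ≤ a i ⬝ᵥ p}, a i ⬝ᵥ v = 0 :=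
    fun i hi v hv => vectorSpan_le_ker_of_isMinOn (dotProductBilin ℝ ℝ (a i)) hx
      (isMinOn_iff.mpr fun p hp => by simpa [hi] using hp i) hv
  ext y
  constructor
  · intro hy v hv
    induction hy using Submodule.span_induction with
    | mem _ h =>
      obtain ⟨i, hi, rfl⟩ := h
      exact hker i hi v hv
    | zero => simp
    | add _ _ _ _ h₁ h₂ => rw [add_dotProduct, h₁, h₂, add_zero]
    | smul r _ _ h => rw [← Nonneg.coe_smul, smul_dotProduct, h, smul_zero]
  · intro hy
    by_contra hyC
    obtain ⟨w, hw, hyw⟩ :=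
      exists_dotProduct_nonneg_of_notMem_hull ((toFinite _).image a) hyC
    obtain ⟨t, htQ, ht⟩ := ((eventually_add_smul_mem_polyhedron a b hxQ
      fun i hi => hw _ ⟨i, hi, rfl⟩).and self_mem_nhdsWithin).exists
    have := hy _ (vsub_mem_vectorSpan ℝ htQ hxQ)
    rw [vsub_eq_sub, add_sub_cancel_left, dotProduct_smul, smul_eq_mul] at this
    nlinarith

theorem isBounded_of_hull_eq_top {J : Set ι} (h : PointedCone.hull ℝ (a '' J) = ⊤) :
    Bornology.IsBounded {p : σ → ℝ | ∀ i ∈ J, b i ≤ a i ⬝ᵥ p} := by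
  classical
  have hbdd : ∀ u ∈ PointedCone.hull ℝ (a '' J),
      ∃ c, ∀ p ∈ {p : σ → ℝ | ∀ i ∈ J, b i ≤ a i ⬝ᵥ p}, c ≤ u ⬝ᵥ p := fun u hu => by
    induction hu using Submodule.span_induction with
    | mem _ h =>
      obtain ⟨i, hi, rfl⟩ := h
      exact ⟨b i, fun p hp => hp i hi⟩
    | zero => exact ⟨0, fun p _ => by simp⟩
    | add _ _ _ _ h₁ h₂ =>
      obtain ⟨c₁, h₁⟩ := h₁
      obtain ⟨c₂, h₂⟩ := h₂
      exact ⟨c₁ + c₂, fun p hp => by rw [add_dotProduct]; linarith [h₁ p hp, h₂ p hp]⟩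
    | smul r _ _ h =>
      obtain ⟨c, hc⟩ := h
      exact ⟨r * c, fun p hp => by
        rw [← Nonneg.coe_smul, smul_dotProduct, smul_eq_mul]
        exact mul_le_mul_of_nonneg_left (hc p hp) r.2⟩
  refine Bornology.forall_isBounded_image_eval_iff.mp fun j => ?_
  obtain ⟨lo, hlo⟩ := hbdd (Pi.single j 1) (h ▸ trivial)
  obtain ⟨hi, hhi⟩ := hbdd (-Pi.single j 1) (h ▸ trivial)
  refine (Metric.isBounded_Icc lo (-hi)).subset ?_
  rintro _ ⟨p, hp, rfl⟩
  have h₁ := hlo p hp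
  have h₂ := hhi p hp
  rw [single_dotProduct, one_mul] at h₁
  rw [neg_dotProduct, single_dotProduct, one_mul] at h₂
  exact ⟨h₁, by simp only [Function.eval]; linarith⟩

end Polyhedron

namespace PolyDesc

variable {n m : ℕ} (D : PolyDesc n m)

def normal (i : Fin m) : Fin n → ℝ := fun j => D.A i j

theorem dF_eq (i : Fin m) (p : Fin n → ℝ) : D.dF i p = D.normal i ⬝ᵥ p - D.b i := rfl

theorem core_eq : D.core = {p | ∀ i, D.b i + D.qcdInv ≤ D.normal i ⬝ᵥ p} := by
  ext p
  simp [core, adj, dist, Finset.le_inf'_iff, dF_eq, le_sub_iff_add_le']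

end PolyDesc

/-- Let `x ∈ relint(core(P))` and let `I = {i : d_{Fᵢ}(x) = μ(P)⁻¹}`
index exactly the facets of `P` at lattice distance `μ(P)⁻¹` from `x`. Then the cone
positively spanned by the corresponding primitive inner normals `aᵢ (i ∈ I)` equals
the orthogonal complement `K(P)^⊥` of the linear space `K(P)` parallel to
`aff(core(P))`. Moreover, if `core(P) = {x}`, then
`{y : d_{Fᵢ}(y) ≥ 0 for all i ∈ I}` is bounded — a rational polytope containing `P`. -/
theorem statement7 {n m : ℕ} (D : PolyDesc n m) (x : Fin n → ℝ)
    (hx : x ∈ intrinsicInterior ℝ D.core)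
    (I : Set (Fin m)) (hI : I = {i | D.dF i x = D.qcdInv}) :
    {y : Fin n → ℝ | ∃ c : Fin m → ℝ, (∀ i, 0 ≤ c i) ∧ (∀ i ∉ I, c i = 0) ∧
        y = ∑ i, c i • (fun j => ((D.A i j : ℝ)))} =
      {y : Fin n → ℝ | ∀ v ∈ vectorSpan ℝ D.core, ∑ j, y j * v j = 0} ∧
    (D.core = {x} →
      Bornology.IsBounded {y : Fin n → ℝ | ∀ i ∈ I, 0 ≤ D.dF i y} ∧
      D.pts ⊆ {y : Fin n → ℝ | ∀ i ∈ I, 0 ≤ D.dF i y}) := by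
  rw [D.core_eq] at hx ⊢
  have hmain := hull_active_eq_orthogonal_vectorSpan _ _ hx
  obtain rfl : I = {i | D.normal i ⬝ᵥ x = D.b i + D.qcdInv} := by
    simp [hI, PolyDesc.dF_eq, sub_eq_iff_eq_add']
  refine ⟨Set.ext fun y => PointedCone.mem_hull_image_iff.symm.trans (Set.ext_iff.mp hmain y),
    fun hcore => ⟨?_, fun p hp i _ => sub_nonneg.mpr (hp i)⟩⟩
  have htop : PointedCone.hull ℝ (D.normal '' {i | D.normal i ⬝ᵥ x = D.b i + D.qcdInv}) = ⊤ := by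
    rw [← SetLike.coe_set_eq, hmain, hcore]
    simp
  simpa [PolyDesc.dF_eq] using isBounded_of_hull_eq_top _ _ htop
end
end

section
/- Let π : ℝ^n → ℝ^{n'} be a surjective linear map with π(ℤ^n) = ℤ^{n'}, mapping the polytope P onto the full-dimensional rational polytope Q := π(P), and assume P is α-canonical for some α > 0. Then α·d_P(x) ≤ d_Q(π(x)) for all x ∈ P. -/
open scoped BigOperators Pointwise

noncomputable section

/- ### Auxiliary machinery for statement9 -/

def rpair {n : ℕ} (w x : Fin n → ℝ) : ℝ := ∑ j, w j * x j

lemma ipair_eq_rpair {n : ℕ} (a : Fin n → ℤ) (x : Fin n → ℝ) :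
    ipair a x = rpair (fun j => (a j : ℝ)) x := rfl

lemma rpair_sum_smul {n m : ℕ} (c : Fin m → ℝ) (v : Fin m → Fin n → ℝ) (x : Fin n → ℝ) :
    rpair (∑ i, c i • v i) x = ∑ i, c i * rpair (v i) x := by
  simp only [rpair, Finset.sum_apply, Pi.smul_apply, smul_eq_mul, Finset.sum_mul,
    Finset.mul_sum]
  rw [Finset.sum_comm]
  exact Finset.sum_congr rfl fun i _ => Finset.sum_congr rfl fun j _ => by ring

lemma rpair_sub_smul {n : ℕ} (w y g : Fin n → ℝ) (ε : ℝ) :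
    rpair w (y - ε • g) = rpair w y - ε * rpair w g := by
  simp only [rpair, Pi.sub_apply, Pi.smul_apply, smul_eq_mul, mul_sub, Finset.sum_sub_distrib,
    Finset.mul_sum]
  congr 1
  exact Finset.sum_congr rfl fun j _ => by ring

lemma continuous_rpair {n : ℕ} (w : Fin n → ℝ) : Continuous (fun x => rpair w x) := by
  unfold rpair
  exact continuous_finset_sum _ fun j _ => (continuous_const.mul (continuous_apply j))

lemma caratheodory_cone {n m : ℕ} (v : Fin m → (Fin n → ℝ)) (s : Finset (Fin m)) :
    ∀ c : Fin m → ℝ, (∀ i, 0 ≤ c i) → (∀ i ∉ s, c i = 0) →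
    ∃ s' : Finset (Fin m), s' ⊆ s ∧ LinearIndependent ℝ (fun i : s' => v i) ∧
      ∃ c' : Fin m → ℝ, (∀ i, 0 ≤ c' i) ∧ (∀ i ∉ s', c' i = 0) ∧
        ∑ i, c' i • v i = ∑ i, c i • v i := by
  classical
  induction s using Finset.strongInduction with
  | _ s ih =>
    intro c hc hsupp
    by_cases hind : LinearIndependent ℝ (fun i : s => v i)
    · exact ⟨s, subset_rfl, hind, c, hc, hsupp, rfl⟩
    · obtain ⟨g, hgsum, i₁, hi₁⟩ := Fintype.not_linearIndependent_iff.mp hind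
      have key : ∀ d : Fin m → ℝ, (∀ i ∉ s, d i = 0) → (∑ i, d i • v i = 0) →
          (∃ i ∈ s, 0 < d i) →
          ∃ s' : Finset (Fin m), s' ⊆ s ∧ LinearIndependent ℝ (fun i : s' => v i) ∧
            ∃ c' : Fin m → ℝ, (∀ i, 0 ≤ c' i) ∧ (∀ i ∉ s', c' i = 0) ∧
              ∑ i, c' i • v i = ∑ i, c i • v i := by
        intro d hdsupp hdsum ⟨ip, hips, hipd⟩
        set T : Finset (Fin m) := s.filter (fun i => 0 < d i) with hT
        have hTne : T.Nonempty := ⟨ip, Finset.mem_filter.2 ⟨hips, hipd⟩⟩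
        set r : ℝ := T.inf' hTne (fun i => c i / d i) with hr
        have hr0 : 0 ≤ r := by
          apply Finset.le_inf'
          intro i hi
          exact div_nonneg (hc i) (le_of_lt (Finset.mem_filter.1 hi).2)
        obtain ⟨i₀, hi₀T, hi₀⟩ := Finset.exists_mem_eq_inf' hTne (fun i => c i / d i)
        have hdi₀ : 0 < d i₀ := (Finset.mem_filter.1 hi₀T).2
        set c' : Fin m → ℝ := fun i => c i - r * d i with hc'
        have hc'0 : ∀ i, 0 ≤ c' i := by
          intro i
          by_cases hiT : i ∈ T
          · have hdi : 0 < d i := (Finset.mem_filter.1 hiT).2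
            have : r ≤ c i / d i := Finset.inf'_le _ hiT
            have := (le_div_iff₀ hdi).1 this
            simp only [hc']; linarith
          · by_cases his : i ∈ s
            · have hdi : d i ≤ 0 := by
                by_contra h
                exact hiT (Finset.mem_filter.2 ⟨his, lt_of_not_ge h⟩)
              have : r * d i ≤ 0 := mul_nonpos_of_nonneg_of_nonpos hr0 hdi
              simp only [hc']; have := hc i; linarith
            · simp only [hc', hdsupp i his, hsupp i his]; ring_nf; exact le_refl 0
        have hc'i₀ : c' i₀ = 0 := by
          have : r = c i₀ / d i₀ := hi₀
          rw [hc']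
          simp only [this]
          rw [div_mul_cancel₀ _ (ne_of_gt hdi₀), sub_self]
        have hsupp' : ∀ i ∉ s.erase i₀, c' i = 0 := by
          intro i hi
          by_cases his : i ∈ s
          · have : i = i₀ := by
              by_contra hne
              exact hi (Finset.mem_erase.2 ⟨hne, his⟩)
            rw [this]; exact hc'i₀
          · simp only [hc', hdsupp i his, hsupp i his]; ring
        have hsum' : ∑ i, c' i • v i = ∑ i, c i • v i := by
          simp only [hc', sub_smul, Finset.sum_sub_distrib, mul_smul]
          rw [← Finset.smul_sum, hdsum, smul_zero, sub_zero]
        obtain ⟨s', hs's, hind', c'', h1, h2, h3⟩ :=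
          ih (s.erase i₀) (Finset.erase_ssubset (Finset.mem_filter.1 hi₀T).1) c' hc'0 hsupp'
        exact ⟨s', hs's.trans (Finset.erase_subset _ _), hind', c'', h1, h2, h3.trans hsum'⟩
      set d : Fin m → ℝ := fun i => if h : i ∈ s then g ⟨i, h⟩ else 0 with hd
      have hdsupp : ∀ i ∉ s, d i = 0 := fun i hi => by simp [hd, hi]
      have hdsum : ∑ i, d i • v i = 0 := by
        rw [← Finset.sum_subset (Finset.subset_univ s)
          (fun i _ hi => by rw [hdsupp i hi, zero_smul])]
        rw [← Finset.sum_attach s (fun i => d i • v i)]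
        simpa [hd] using hgsum
      by_cases hpos : ∃ i ∈ s, 0 < d i
      · exact key d hdsupp hdsum hpos
      · have hneg : ∃ i ∈ s, 0 < -d i := by
          refine ⟨i₁, i₁.2, ?_⟩
          have hne : d i₁ ≠ 0 := by simpa [hd, i₁.2] using hi₁
          push_neg at hpos
          have := hpos i₁ i₁.2
          cases lt_or_eq_of_le this with
          | inl h => linarith
          | inr h => exact absurd h hne
        exact key (-d) (fun i hi => by simp [hdsupp i hi]) (by simpa using hdsum) hneg

def coneOf {n m : ℕ} (v : Fin m → (Fin n → ℝ)) (I : Set (Fin m)) : Set (Fin n → ℝ) :=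
  {x | ∃ c : Fin m → ℝ, (∀ i, 0 ≤ c i) ∧ (∀ i ∉ I, c i = 0) ∧ x = ∑ i, c i • v i}

lemma convex_coneOf {n m : ℕ} (v : Fin m → (Fin n → ℝ)) (I : Set (Fin m)) :
    Convex ℝ (coneOf v I) := by
  rintro x ⟨cx, hcx0, hcxI, rfl⟩ y ⟨cy, hcy0, hcyI, rfl⟩ a b ha hb hab
  refine ⟨fun i => a * cx i + b * cy i,
    fun i => add_nonneg (mul_nonneg ha (hcx0 i)) (mul_nonneg hb (hcy0 i)),
    fun i hi => by simp only [hcxI i hi, hcyI i hi]; ring, ?_⟩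
  rw [Finset.smul_sum, Finset.smul_sum, ← Finset.sum_add_distrib]
  exact Finset.sum_congr rfl fun i _ => by
    show a • cx i • v i + b • cy i • v i = (a * cx i + b * cy i) • v i
    rw [add_smul, smul_smul, smul_smul]

lemma smul_mem_coneOf {n m : ℕ} {v : Fin m → (Fin n → ℝ)} {I : Set (Fin m)}
    {x : Fin n → ℝ} (hx : x ∈ coneOf v I) {t : ℝ} (ht : 0 ≤ t) : t • x ∈ coneOf v I := by
  obtain ⟨c, hc0, hcI, rfl⟩ := hx
  refine ⟨fun i => t * c i, fun i => mul_nonneg ht (hc0 i),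
    fun i hi => by simp only [hcI i hi]; ring, ?_⟩
  rw [Finset.smul_sum]
  exact Finset.sum_congr rfl fun i _ => by rw [smul_smul]

lemma zero_mem_coneOf {n m : ℕ} (v : Fin m → (Fin n → ℝ)) (I : Set (Fin m)) :
    (0 : Fin n → ℝ) ∈ coneOf v I :=
  ⟨0, fun _ => le_refl 0, fun _ _ => rfl, by simp⟩

lemma gen_mem_coneOf {n m : ℕ} (v : Fin m → (Fin n → ℝ)) {I : Set (Fin m)} {i : Fin m}
    (hi : i ∈ I) : v i ∈ coneOf v I := by
  classical
  refine ⟨fun i' => if i' = i then 1 else 0, fun i' => by positivity,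
    fun i' hi' => if_neg (fun h : i' = i => hi' (h ▸ hi)), ?_⟩
  simp [ite_smul]

lemma isClosed_cone_finset {n m : ℕ} (v : Fin m → (Fin n → ℝ)) (s : Finset (Fin m))
    (hind : LinearIndependent ℝ (fun i : s => v i)) :
    IsClosed {x : Fin n → ℝ | ∃ c : Fin m → ℝ, (∀ i, 0 ≤ c i) ∧ (∀ i ∉ s, c i = 0) ∧
      x = ∑ i, c i • v i} := by
  classical
  set L : ({ x // x ∈ s } → ℝ) →ₗ[ℝ] (Fin n → ℝ) :=
    { toFun := fun c => ∑ i : s, c i • v i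
      map_add' := fun c c' => by
        simp [add_smul, Finset.sum_add_distrib]
      map_smul' := fun t c => by
        simp [smul_smul, Finset.smul_sum] } with hL
  have hker : LinearMap.ker L = ⊥ := by
    rw [LinearMap.ker_eq_bot']
    intro c hc
    have := Fintype.linearIndependent_iff.mp hind c hc
    funext i; exact this i
  have hemb := LinearMap.isClosedEmbedding_of_injective hker
  have hclosed : IsClosed {c : { x // x ∈ s } → ℝ | ∀ i, 0 ≤ c i} := by
    have : {c : { x // x ∈ s } → ℝ | ∀ i, 0 ≤ c i} = ⋂ i, {c | 0 ≤ c i} := by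
      ext c; simp [Set.mem_iInter]
    rw [this]
    exact isClosed_iInter fun i => isClosed_le continuous_const (continuous_apply i)
  have himg : {x : Fin n → ℝ | ∃ c : Fin m → ℝ, (∀ i, 0 ≤ c i) ∧ (∀ i ∉ s, c i = 0) ∧
      x = ∑ i, c i • v i} = L '' {c | ∀ i, 0 ≤ c i} := by
    ext x
    constructor
    · rintro ⟨c, hc0, hcs, rfl⟩
      refine ⟨fun i => c i, fun i => hc0 i, ?_⟩
      show ∑ i : s, c i • v (i : Fin m) = _
      rw [← Finset.sum_subset (Finset.subset_univ s)
        (fun i _ hi => by rw [hcs i hi, zero_smul])]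
      rw [← Finset.sum_attach s (fun i => c i • v i)]
      rfl
    · rintro ⟨c, hc0, rfl⟩
      refine ⟨fun i => if h : i ∈ s then c ⟨i, h⟩ else 0,
        fun i => by by_cases h : i ∈ s <;> simp only [h, dite_true, dite_false] <;>
          first | exact hc0 _ | exact le_refl 0, fun i hi => by simp [hi], ?_⟩
      show (_ : Fin n → ℝ) = _
      rw [← Finset.sum_subset (Finset.subset_univ s)
        (fun i _ hi => by simp [hi])]
      rw [← Finset.sum_attach s (fun i => (if h : i ∈ s then c ⟨i, h⟩ else 0) • v i)]
      exact Finset.sum_congr rfl fun i _ => by simp [i.2]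
  rw [himg]
  exact hemb.isClosedMap _ hclosed

lemma isClosed_coneOf {n m : ℕ} (v : Fin m → (Fin n → ℝ)) (I : Set (Fin m)) :
    IsClosed (coneOf v I) := by
  classical
  have hIfin : I.Finite := Set.toFinite I
  have heq : coneOf v I =
      ⋃ s ∈ {s : Finset (Fin m) | ↑s ⊆ I ∧ LinearIndependent ℝ (fun i : s => v i)},
        {x : Fin n → ℝ | ∃ c : Fin m → ℝ, (∀ i, 0 ≤ c i) ∧ (∀ i ∉ s, c i = 0) ∧
          x = ∑ i, c i • v i} := by
    ext x
    simp only [Set.mem_iUnion, Set.mem_setOf_eq]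
    constructor
    · rintro ⟨c, hc0, hcI, rfl⟩
      obtain ⟨s', hs'sub, hind, c', h1, h2, h3⟩ := caratheodory_cone v hIfin.toFinset c hc0
        (fun i hi => hcI i (fun h => hi (hIfin.mem_toFinset.2 h)))
      exact ⟨s', ⟨fun i hi => hIfin.mem_toFinset.1 (hs'sub hi), hind⟩, c', h1, h2, h3.symm⟩
    · rintro ⟨s, ⟨hsI, _⟩, c, hc0, hcs, rfl⟩
      exact ⟨c, hc0, fun i hi => hcs i (fun h => hi (hsI h)), rfl⟩
  rw [heq]
  exact Set.Finite.isClosed_biUnion (Set.toFinite _)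
    (fun s hs => isClosed_cone_finset v s hs.2)

lemma farkas {n m : ℕ} (v : Fin m → (Fin n → ℝ)) (bb : Fin m → ℝ) (ζ : Fin n → ℝ)
    (y : Fin n → ℝ) (hy : ∀ i, bb i ≤ rpair (v i) y)
    (hmin : ∀ x : Fin n → ℝ, (∀ i, bb i ≤ rpair (v i) x) → rpair ζ y ≤ rpair ζ x) :
    ζ ∈ coneOf v {i | rpair (v i) y = bb i} := by
  classical
  set I : Set (Fin m) := {i | rpair (v i) y = bb i} with hI
  by_contra hζ
  obtain ⟨f, u, hfu, huζ⟩ :=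
    geometric_hahn_banach_closed_point (convex_coneOf v I) (isClosed_coneOf v I) hζ
  have hu0 : 0 < u := by simpa using hfu 0 (zero_mem_coneOf v I)
  have hfle : ∀ w ∈ coneOf v I, f w ≤ 0 := by
    intro w hw
    by_contra h
    push_neg at h
    have ht : (0:ℝ) ≤ (u + 1) / f w := div_nonneg (by linarith) (le_of_lt h)
    have := hfu _ (smul_mem_coneOf hw ht)
    rw [map_smul, smul_eq_mul, div_mul_cancel₀ _ (ne_of_gt h)] at this
    linarith
  set g : Fin n → ℝ := fun j => f (fun j' => if j = j' then 1 else 0) with hg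
  have hfr : ∀ w : Fin n → ℝ, f w = rpair w g := by
    intro w
    conv_lhs => rw [pi_eq_sum_univ w]
    rw [map_sum]
    unfold rpair
    exact Finset.sum_congr rfl fun j _ => by rw [map_smul, smul_eq_mul, hg]
  have key : ∀ᶠ ε in nhdsWithin (0:ℝ) (Set.Ioi 0),
      (∀ i, bb i ≤ rpair (v i) (y - ε • g)) ∧ rpair ζ (y - ε • g) < rpair ζ y := by
    have h1 : ∀ᶠ ε in nhdsWithin (0:ℝ) (Set.Ioi 0), ∀ i, bb i ≤ rpair (v i) (y - ε • g) := by
      rw [Filter.eventually_all]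
      intro i
      by_cases hiI : i ∈ I
      · filter_upwards [self_mem_nhdsWithin] with ε (hε : ε ∈ Set.Ioi (0:ℝ))
        rw [rpair_sub_smul]
        have h2 : rpair (v i) g ≤ 0 := by rw [← hfr]; exact hfle _ (gen_mem_coneOf v hiI)
        have := hy i
        nlinarith [Set.mem_Ioi.1 hε]
      · have hlt : bb i < rpair (v i) y := lt_of_le_of_ne (hy i) (fun h => hiI h.symm)
        have hcont : Continuous (fun ε : ℝ => rpair (v i) y - ε * rpair (v i) g) :=
          continuous_const.sub (continuous_id.mul continuous_const)
        have htend : Filter.Tendsto (fun ε : ℝ => rpair (v i) y - ε * rpair (v i) g)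
            (nhds 0) (nhds (rpair (v i) y)) := by
          have := hcont.tendsto 0
          simpa using this
        have := htend.eventually (eventually_gt_nhds hlt)
        apply Filter.Eventually.mono (nhdsWithin_le_nhds this)
        intro ε hε
        rw [rpair_sub_smul]
        exact le_of_lt hε
    have h2 : ∀ᶠ ε in nhdsWithin (0:ℝ) (Set.Ioi 0), rpair ζ (y - ε • g) < rpair ζ y := by
      filter_upwards [self_mem_nhdsWithin] with ε (hε : ε ∈ Set.Ioi (0:ℝ))
      rw [rpair_sub_smul]
      have hfζ : 0 < rpair ζ g := by rw [← hfr]; linarith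
      nlinarith [Set.mem_Ioi.1 hε]
    exact h1.and h2
  obtain ⟨ε, h1, h2⟩ := key.exists
  exact absurd (hmin _ h1) (not_le.2 h2)


/-- Let `π : ℝⁿ → ℝ^{n'}` be a surjective linear map with
`π(ℤⁿ) = ℤ^{n'}` mapping `P` onto the full-dimensional rational polytope `Q = π(P)`
(with irredundant facet description `D'`), and assume `P` is `α`-canonical for some
`α > 0`. Then `α · d_P(x) ≤ d_Q(π(x))` for all `x ∈ P`. -/
theorem statement9 {n m n' : ℕ} (D : PolyDesc n m)
    (π : (Fin n → ℝ) →ₗ[ℝ] (Fin n' → ℝ))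
    (hsurj : Function.Surjective π)
    (hlat : π '' IntPts n = IntPts n')
    (α : ℝ) (hα : 0 < α) (hcan : AlphaCanonical D α)
    {m' : ℕ} (D' : PolyDesc n' m') (hQ : D'.pts = π '' D.pts) :
    ∀ x ∈ D.pts, α * D.dist x ≤ D'.dist (π x) := by
  classical
  have hPclosed : IsClosed D.pts := by
    have : D.pts = ⋂ i, {x : Fin n → ℝ | (D.b i : ℝ) ≤ ipair (D.A i) x} := by
      ext x; simp [PolyDesc.pts, Set.mem_iInter]
    rw [this]
    exact isClosed_iInter fun i =>
      isClosed_le continuous_const (continuous_rpair fun j => ((D.A i j : ℝ)))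
  have hPcompact : IsCompact D.pts :=
    Metric.isCompact_of_isClosed_isBounded hPclosed D.bounded
  have hPne : D.pts.Nonempty := by
    rw [Set.nonempty_iff_ne_empty]
    intro h
    have h2 := D.fulldim
    have h3 : setDim (∅ : Set (Fin n → ℝ)) = 0 := by
      simp [setDim, vectorSpan_empty]
    rw [show {x : Fin n → ℝ | ∀ i, (D.b i : ℝ) ≤ ipair (D.A i) x} = D.pts from rfl, h, h3] at h2
    have h4 := D.facet_dim ⟨0, D.hm⟩
    omega
  have hims : ∀ j : Fin n, ∃ w : Fin n' → ℤ,
      π (fun j' => if j = j' then (1:ℝ) else 0) = fun k => (w k : ℝ) := by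
    intro j
    have hmem : (fun j' => if j = j' then (1:ℝ) else 0) ∈ IntPts n := by
      refine ⟨fun j' => if j = j' then 1 else 0, ?_⟩
      funext j'
      by_cases h : j = j' <;> simp [h]
    have hmem2 : π (fun j' => if j = j' then (1:ℝ) else 0) ∈ IntPts n' := by
      rw [← hlat]; exact ⟨_, hmem, rfl⟩
    obtain ⟨w, hw⟩ := hmem2
    exact ⟨w, hw.symm⟩
  choose w hw using hims
  have hπx : ∀ x : Fin n → ℝ, π x = fun k => ∑ j, x j * (w j k : ℝ) := by
    intro x
    conv_lhs => rw [pi_eq_sum_univ x, map_sum]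
    funext k
    rw [Finset.sum_apply]
    refine Finset.sum_congr rfl fun j _ => ?_
    rw [map_smul, hw j]
    simp
  -- main bound for each facet of Q
  have main : ∀ t : ℝ, 0 ≤ t → t < α → ∀ x ∈ D.pts, ∀ i' : Fin m',
      t * D.dist x ≤ D'.dF i' (π x) := by
    intro t ht0 htα x hx i'
    set z : Fin n → ℤ := fun j => ∑ k, D'.A i' k * w j k with hz
    set ζ : Fin n → ℝ := fun j => (z j : ℝ) with hζ
    have hzx : ∀ x' : Fin n → ℝ, ipair (D'.A i') (π x') = rpair ζ x' := by
      intro x'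
      rw [hπx x']
      unfold ipair rpair
      simp only [hζ, hz, Finset.mul_sum, Finset.sum_mul, Int.cast_sum, Int.cast_mul]
      rw [Finset.sum_comm]
      exact Finset.sum_congr rfl fun j _ => Finset.sum_congr rfl fun k _ => by ring
    have hz0 : z ≠ 0 := by
      intro h
      have haz : D'.A i' = 0 := by
        funext k
        obtain ⟨x', hx'⟩ := hsurj (fun k' => if k = k' then (1:ℝ) else 0)
        have hid := hzx x'
        rw [hx'] at hid
        have hL : ipair (D'.A i') (fun k' => if k = k' then (1:ℝ) else 0)
            = (D'.A i' k : ℝ) := by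
          unfold ipair
          simp [mul_ite, Finset.sum_ite_eq]
        have hR : rpair ζ x' = 0 := by
          simp [rpair, hζ, h]
        rw [hL, hR] at hid
        exact_mod_cast hid
      exact (D'.prim i').1 haz
    obtain ⟨y, hyP, hymin⟩ := hPcompact.exists_isMinOn hPne (continuous_rpair ζ).continuousOn
    set coeA : Fin m → (Fin n → ℝ) := fun i j => (D.A i j : ℝ) with hcoeA
    have hfk := farkas coeA (fun i => (D.b i : ℝ)) ζ y (fun i => hyP i)
      (fun x' hx' => hymin hx')
    obtain ⟨c₀, hc₀0, hc₀I, hc₀sum⟩ := hfk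
    have hheight : α ≤ coneHeight D (D.active y) (fun j => ((z j : ℝ))) :=
      hcan y hyP z hz0 ⟨c₀, hc₀0, fun i hi => hc₀I i hi, hc₀sum⟩
    have hne0 : (∑ i, c₀ i) ∈ {t : ℝ | ∃ c : Fin m → ℝ, (∀ i, 0 ≤ c i) ∧
        (∀ i ∉ D.active y, c i = 0) ∧
        ((fun j => ((z j : ℝ))) = ∑ i, c i • (fun j => ((D.A i j : ℝ)))) ∧ t = ∑ i, c i} :=
      ⟨c₀, hc₀0, fun i hi => hc₀I i hi, hc₀sum, rfl⟩
    obtain ⟨s', hs'mem, hts'⟩ :=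
      exists_lt_of_lt_csSup ⟨_, hne0⟩ (lt_of_lt_of_le htα hheight)
    obtain ⟨c, hc0, hcI, hcsum, rfl⟩ := hs'mem
    have hdistx0 : 0 ≤ D.dist x := by
      unfold PolyDesc.dist
      apply Finset.le_inf'
      intro i _
      have := hx i
      unfold PolyDesc.dF
      linarith
    have hπyQ : π y ∈ D'.pts := by rw [hQ]; exact ⟨y, hyP, rfl⟩
    have hb' : ((D'.b i' : ℚ) : ℝ) ≤ rpair ζ y := by
      have := hπyQ i'
      rwa [hzx y] at this
    have hsum1 : rpair ζ x - rpair ζ y = ∑ i, c i * D.dF i x := by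
      rw [show ζ = ∑ i, c i • coeA i from hcsum, rpair_sum_smul, rpair_sum_smul,
        ← Finset.sum_sub_distrib]
      refine Finset.sum_congr rfl fun i _ => ?_
      by_cases hi : i ∈ D.active y
      · have hact : rpair (coeA i) y = ((D.b i : ℚ) : ℝ) := hi
        rw [hact]
        unfold PolyDesc.dF
        show c i * rpair (coeA i) x - c i * _ = c i * (rpair (coeA i) x - _)
        ring
      · rw [hcI i hi]; ring
    have hsum2 : ∑ i, c i * D.dist x ≤ ∑ i, c i * D.dF i x := by
      refine Finset.sum_le_sum fun i _ => mul_le_mul_of_nonneg_left ?_ (hc0 i)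
      unfold PolyDesc.dist
      exact Finset.inf'_le _ (Finset.mem_univ i)
    have hfin : t * D.dist x ≤ rpair ζ x - rpair ζ y := by
      calc t * D.dist x ≤ (∑ i, c i) * D.dist x :=
            mul_le_mul_of_nonneg_right (le_of_lt hts') hdistx0
        _ = ∑ i, c i * D.dist x := by rw [Finset.sum_mul]
        _ ≤ ∑ i, c i * D.dF i x := hsum2
        _ = rpair ζ x - rpair ζ y := hsum1.symm
    unfold PolyDesc.dF
    rw [hzx x]
    linarith
  intro x hx
  have hdistx0 : 0 ≤ D.dist x := by
    unfold PolyDesc.dist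
    apply Finset.le_inf'
    intro i _
    have := hx i
    unfold PolyDesc.dF
    linarith
  have hQ0 : ∀ t : ℝ, 0 ≤ t → t < α → t * D.dist x ≤ D'.dist (π x) := by
    intro t h1 h2
    unfold PolyDesc.dist
    exact Finset.le_inf' _ _ fun i' _ => main t h1 h2 x hx i'
  have h0 : 0 ≤ D'.dist (π x) := by
    have := hQ0 0 le_rfl hα
    simpa using this
  rcases eq_or_lt_of_le hdistx0 with h | h
  · rw [← h, mul_zero]
    exact h0
  · by_contra hcon
    push_neg at hcon
    have h1 : D'.dist (π x) / D.dist x < α := (div_lt_iff₀ h).2 (by linarith)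
    have hdiv0 : 0 ≤ D'.dist (π x) / D.dist x := div_nonneg h0 (le_of_lt h)
    set t := (D'.dist (π x) / D.dist x + α) / 2 with hts
    have h2 : 0 ≤ t := by rw [hts]; linarith
    have h3 : t < α := by rw [hts]; linarith
    have h4 := hQ0 t h2 h3
    have h5 : D'.dist (π x) / D.dist x < t := by rw [hts]; linarith
    have h6 : D'.dist (π x) < t * D.dist x := (div_lt_iff₀ h).1 h5
    linarith


end
end
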